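/- Fixed-dictionary reconstruction error lower bound: Let C* ∈ ℝ^{d×k} and C_W ∈ ℝ^{d×m} with k ≤ d < m, and suppose min over P ∈ ℝ^{m×k} of ‖C_W P − C*‖_F ≥ δ for some δ > 0. If A ∈ ℝ^{n×d} satisfies A = Z* (C*)ᵀ with σ_k(Z*) > 0, then min over Z ∈ ℝ^{n×m} of ‖A − Z C_Wᵀ‖_F ≥ σ_k(Z*) · δ. -/

import Mathlib

open Matrix

/-- Frobenius norm of a real matrix. -/
noncomputable def frob {m n : Type*} [Fintype m] [Fintype n] (A : Matrix m n ℝ) : ℝ :=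
  Real.sqrt (∑ i, ∑ j, A i j ^ 2)

/-- The `k`-th largest (i.e. smallest) singular value of `Z ∈ ℝ^{n×k}`:
`σ_k(Z) = sqrt(λ_k(ZᵀZ)) = inf {‖Zu‖ : ‖u‖ = 1}`. -/
noncomputable def sigmaMinCol {n k : Type*} [Fintype n] [Fintype k] (Z : Matrix n k ℝ) : ℝ :=
  sInf {r | ∃ u : k → ℝ, (∑ j, u j ^ 2) = 1 ∧ r = Real.sqrt (∑ i, (Z.mulVec u) i ^ 2)}

/-!
Solve the normal equations `Z*ᵀ (Z - Z* Q) = 0`; this is possible because `σ_k(Z*) > 0` makes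
`Z*` injective, hence `Z*ᵀ Z*` invertible. Then
`A - Z C_Wᵀ = Z* (C*ᵀ - Q C_Wᵀ) - (Z - Z* Q) C_Wᵀ` is a sum of two matrices that are orthogonal
for the Frobenius inner product, so
`‖A - Z C_Wᵀ‖_F ≥ ‖Z* (C*ᵀ - Q C_Wᵀ)‖_F ≥ σ_k(Z*) ‖C_W Qᵀ - C*‖_F ≥ σ_k(Z*) δ`,
the middle step applying `‖Z* u‖ ≥ σ_k(Z*) ‖u‖` column by column.
-/

section
variable {ι κ μ : Type*} [Fintype ι] [Fintype κ] [Fintype μ]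

lemma frob_nonneg (A : Matrix ι κ ℝ) : 0 ≤ frob A := Real.sqrt_nonneg _

lemma frob_transpose (A : Matrix ι κ ℝ) : frob Aᵀ = frob A := by
  rw [frob, frob, Finset.sum_comm]; rfl

lemma frob_neg (A : Matrix ι κ ℝ) : frob (-A) = frob A := by
  simp [frob]

lemma frob_sq_eq_sum_norm_sq_col (M : Matrix κ μ ℝ) :
    frob M ^ 2 = ∑ j, ‖WithLp.toLp 2 (fun i ↦ M i j)‖ ^ 2 := by
  rw [frob, Real.sq_sqrt (by positivity), Finset.sum_comm]
  simp [EuclideanSpace.norm_sq_eq]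

lemma frob_le_frob_add_of_transpose_mul_eq_zero {P Q : Matrix ι κ ℝ} (h : Pᵀ * Q = 0) :
    frob P ≤ frob (P + Q) := by
  have hPQ : ∑ i, ∑ j, P i j * Q i j = 0 := by
    rw [Finset.sum_comm]
    simpa [trace, mul_apply] using congrArg trace h
  refine Real.sqrt_le_sqrt ?_
  simp only [Matrix.add_apply, add_sq, Finset.sum_add_distrib, mul_assoc, ← Finset.mul_sum, hPQ,
    mul_zero, add_zero]
  exact le_add_of_nonneg_right (by positivity)

lemma sigmaMinCol_nonneg (Z : Matrix ι κ ℝ) : 0 ≤ sigmaMinCol Z :=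
  Real.sInf_nonneg (by rintro r ⟨u, -, rfl⟩; exact Real.sqrt_nonneg _)

lemma sigmaMinCol_le_norm_mulVec (Z : Matrix ι κ ℝ) {u : κ → ℝ} (hu : ‖WithLp.toLp 2 u‖ = 1) :
    sigmaMinCol Z ≤ ‖WithLp.toLp 2 (Z *ᵥ u)‖ := by
  refine csInf_le ⟨0, by rintro r ⟨v, -, rfl⟩; exact Real.sqrt_nonneg _⟩ ⟨u, ?_, ?_⟩
  · simpa [EuclideanSpace.norm_eq] using hu
  · simp [EuclideanSpace.norm_eq]

lemma sigmaMinCol_mul_norm_le_norm_mulVec (Z : Matrix ι κ ℝ) (u : κ → ℝ) :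
    sigmaMinCol Z * ‖WithLp.toLp 2 u‖ ≤ ‖WithLp.toLp 2 (Z *ᵥ u)‖ := by
  rcases eq_or_ne u 0 with rfl | hu
  · simp
  have hpos : 0 < ‖WithLp.toLp 2 u‖ := norm_pos_iff.mpr (by simpa using hu)
  have hunit : ‖WithLp.toLp 2 (‖WithLp.toLp 2 u‖⁻¹ • u)‖ = 1 := by
    rw [WithLp.toLp_smul, norm_smul, norm_inv, norm_norm, inv_mul_cancel₀ hpos.ne']
  have h := sigmaMinCol_le_norm_mulVec Z hunit
  rw [mulVec_smul, WithLp.toLp_smul, norm_smul, norm_inv, norm_norm] at h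
  rwa [le_inv_mul_iff₀ hpos, mul_comm] at h

lemma sigmaMinCol_mul_frob_le_frob_mul (Z : Matrix ι κ ℝ) (M : Matrix κ μ ℝ) :
    sigmaMinCol Z * frob M ≤ frob (Z * M) := by
  refine le_of_pow_le_pow_left₀ two_ne_zero (frob_nonneg _) ?_
  rw [mul_pow, frob_sq_eq_sum_norm_sq_col, frob_sq_eq_sum_norm_sq_col, Finset.mul_sum]
  gcongr with j
  have hcol : (fun i ↦ (Z * M) i j) = Z *ᵥ fun i ↦ M i j := by
    ext i; simp [mul_apply, mulVec, dotProduct]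
  rw [hcol, ← mul_pow]
  exact pow_le_pow_left₀ (mul_nonneg (sigmaMinCol_nonneg Z) (norm_nonneg _))
    (sigmaMinCol_mul_norm_le_norm_mulVec Z _) 2

lemma isUnit_transpose_mul_self_of_sigmaMinCol_pos [DecidableEq κ] {Z : Matrix ι κ ℝ}
    (hZ : 0 < sigmaMinCol Z) : IsUnit (Zᵀ * Z) := by
  have hinj : Function.Injective Z.mulVec := by
    intro u v huv
    have h := sigmaMinCol_mul_norm_le_norm_mulVec Z (u - v)
    rw [mulVec_sub, huv, sub_self, WithLp.toLp_zero, norm_zero] at h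
    have : ‖WithLp.toLp 2 (u - v)‖ = 0 :=
      le_antisymm (nonpos_of_mul_nonpos_right h hZ) (norm_nonneg _)
    simpa [sub_eq_zero] using this
  simpa using (PosDef.conjTranspose_mul_self Z hinj).isUnit

end

lemma exists_transpose_mul_sub_mul_eq_zero {R ι κ μ : Type*} [CommRing R] [Fintype ι]
    [Fintype κ] [DecidableEq κ] {Y : Matrix ι κ R} (hY : IsUnit (Yᵀ * Y)) (Z : Matrix ι μ R) :
    ∃ Q : Matrix κ μ R, Yᵀ * (Z - Y * Q) = 0 := by
  obtain ⟨U, hU⟩ := hY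
  refine ⟨(↑U⁻¹ : Matrix κ κ R) * (Yᵀ * Z), ?_⟩
  rw [Matrix.mul_sub, ← Matrix.mul_assoc Yᵀ, ← hU, ← Matrix.mul_assoc, Units.mul_inv,
    Matrix.one_mul, sub_self]

theorem fixed_dictionary_reconstruction_lower_bound_general
    (n d k m : ℕ)
    (Cstar : Matrix (Fin d) (Fin k) ℝ) (CW : Matrix (Fin d) (Fin m) ℝ)
    (δ : ℝ)
    (hmis : ∀ P : Matrix (Fin m) (Fin k) ℝ, δ ≤ frob (CW * P - Cstar))
    (Zstar : Matrix (Fin n) (Fin k) ℝ) (A : Matrix (Fin n) (Fin d) ℝ)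
    (hA : A = Zstar * Cstarᵀ) (hσ : 0 < sigmaMinCol Zstar) :
    ∀ Z : Matrix (Fin n) (Fin m) ℝ, sigmaMinCol Zstar * δ ≤ frob (A - Z * CWᵀ) := by
  intro Z
  obtain ⟨Q, hQ⟩ := exists_transpose_mul_sub_mul_eq_zero
    (isUnit_transpose_mul_self_of_sigmaMinCol_pos hσ) Z
  have hsplit : A - Z * CWᵀ = Zstar * (Cstarᵀ - Q * CWᵀ) + -((Z - Zstar * Q) * CWᵀ) := by
    rw [hA]; simp only [Matrix.mul_sub, Matrix.sub_mul, Matrix.mul_assoc]; abel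
  have horth : (Zstar * (Cstarᵀ - Q * CWᵀ))ᵀ * -((Z - Zstar * Q) * CWᵀ) = 0 := by
    rw [transpose_mul, Matrix.mul_assoc, Matrix.mul_neg, ← Matrix.mul_assoc Zstarᵀ, hQ,
      Matrix.zero_mul, neg_zero, Matrix.mul_zero]
  calc sigmaMinCol Zstar * δ
      ≤ sigmaMinCol Zstar * frob (CW * Qᵀ - Cstar) :=
        mul_le_mul_of_nonneg_left (hmis Qᵀ) (sigmaMinCol_nonneg _)
    _ = sigmaMinCol Zstar * frob (Cstarᵀ - Q * CWᵀ) := by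
        rw [← frob_transpose, transpose_sub, transpose_mul, transpose_transpose, ← frob_neg,
          neg_sub]
    _ ≤ frob (Zstar * (Cstarᵀ - Q * CWᵀ)) := sigmaMinCol_mul_frob_le_frob_mul _ _
    _ ≤ frob (A - Z * CWᵀ) := hsplit ▸ frob_le_frob_add_of_transpose_mul_eq_zero horth

/-- Fixed-dictionary reconstruction error lower bound: if every `P` leaves a misalignment
`‖C_W P − C*‖_F ≥ δ` and `A = Z* (C*)ᵀ` with `σ_k(Z*) > 0`, then every `Z` satisfies
`‖A − Z C_Wᵀ‖_F ≥ σ_k(Z*) · δ`. -/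
theorem fixed_dictionary_reconstruction_lower_bound
    (n d k m : ℕ) (hkd : k ≤ d) (hdm : d < m)
    (Cstar : Matrix (Fin d) (Fin k) ℝ) (CW : Matrix (Fin d) (Fin m) ℝ)
    (δ : ℝ) (hδ : 0 < δ)
    (hmis : ∀ P : Matrix (Fin m) (Fin k) ℝ, δ ≤ frob (CW * P - Cstar))
    (Zstar : Matrix (Fin n) (Fin k) ℝ) (A : Matrix (Fin n) (Fin d) ℝ)
    (hA : A = Zstar * Cstarᵀ) (hσ : 0 < sigmaMinCol Zstar) :
    ∀ Z : Matrix (Fin n) (Fin m) ℝ, sigmaMinCol Zstar * δ ≤ frob (A - Z * CWᵀ) :=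
  fixed_dictionary_reconstruction_lower_bound_general n d k m Cstar CW δ hmis Zstar A hA hσ
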